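/- arXiv:2006.08073 — 3 statements merged into one kernel-verified Lean document; each statement's English description precedes it below -/
import Mathlib

section
/- Let Q be a quiver with finite vertex set V, finite arrow set A and source and target maps s, t : A → V, and let (E, R) be a representation of Q by finite-dimensional real normed vector spaces E_v and continuous linear maps R_a : E_{s(a)} → E_{t(a)}. Let Λ be an open neighbourhood of 0 in ℝ^p and let F_v : E_v × Λ → E_v (v ∈ V) be C^∞ maps with F_v(0; 0) = 0 and R_a(F_{s(a)}(x; λ)) = F_{t(a)}(R_a x; λ) for all a ∈ A, x ∈ E_{s(a)}, λ ∈ Λ. Put L_v := D_x F_v(0; 0), d_v := dim E_v, E_v^ker := ker(L_v^{d_v}), E_v^im := range(L_v^{d_v}), so that E_v = E_v^ker ⊕ E_v^im, and let π_v : E_v → E_v^im be the projection onto E_v^im along E_v^ker. Then there exist open neighbourhoods U_v of (0; 0) in E_v^ker × Λ and C^∞ maps φ_v : U_v → E_v^im with φ_v(0; 0) = 0 and π_v(F_v(x + φ_v(x; λ); λ)) = 0 for all (x; λ) ∈ U_v, such that the reduced maps f_v(x; λ) := (Id − π_v)(F_v(x + φ_v(x; λ); λ)) satisfy the equivariance R_a(f_{s(a)}(x;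 λ)) = f_{t(a)}(R_a x; λ) for every arrow a ∈ A and all (x; λ) in some open neighbourhood of (0; 0) in E_{s(a)}^ker × Λ. -/
open Module Filter Topology

lemma LS_range_stab {E₀ : Type*} [NormedAddCommGroup E₀] [NormedSpace ℝ E₀]
    [FiniteDimensional ℝ E₀] (f : Module.End ℝ E₀) {m : ℕ} (hm : finrank ℝ E₀ ≤ m) :
    LinearMap.range (f ^ m) = LinearMap.range (f ^ finrank ℝ E₀) := by
  set d := finrank ℝ E₀ with hd
  have hle : LinearMap.range (f ^ m) ≤ LinearMap.range (f ^ d) := by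
    obtain ⟨k, rfl⟩ : ∃ k, m = d + k := ⟨m - d, (Nat.add_sub_cancel' hm).symm⟩
    rintro x ⟨y, rfl⟩
    exact ⟨(f ^ k) y, by rw [pow_add, Module.End.mul_apply]⟩
  refine Submodule.eq_of_le_of_finrank_le hle ?_
  have h1 := LinearMap.finrank_range_add_finrank_ker (f ^ m)
  have h2 := LinearMap.finrank_range_add_finrank_ker (f ^ d)
  have hker : LinearMap.ker (f ^ m) = LinearMap.ker (f ^ d) := by
    simpa using Module.End.ker_pow_eq_ker_pow_finrank_of_le hm
  rw [hker] at h1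
  omega

lemma LS_fitting {E₀ : Type*} [NormedAddCommGroup E₀] [NormedSpace ℝ E₀]
    [FiniteDimensional ℝ E₀] (f : Module.End ℝ E₀) :
    IsCompl (LinearMap.ker (f ^ finrank ℝ E₀)) (LinearMap.range (f ^ finrank ℝ E₀)) := by
  obtain ⟨n, hn⟩ := eventually_atTop.mp f.eventually_isCompl_ker_pow_range_pow
  have h := hn (max n (finrank ℝ E₀)) (le_max_left _ _)
  rwa [Module.End.ker_pow_eq_ker_pow_finrank_of_le (le_max_right _ _),
    LS_range_stab f (le_max_right _ _)] at h

lemma LS_aux {E₀ : Type*} [NormedAddCommGroup E₀] [NormedSpace ℝ E₀] [FiniteDimensional ℝ E₀]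
    {p : ℕ} (Λ : Set (Fin p → ℝ)) (hΛopen : IsOpen Λ) (hΛ0 : (0 : Fin p → ℝ) ∈ Λ)
    (F₀ : E₀ → (Fin p → ℝ) → E₀)
    (hs : ContDiffOn ℝ (⊤ : ℕ∞) (fun q : E₀ × (Fin p → ℝ) => F₀ q.1 q.2) (Set.univ ×ˢ Λ))
    (h0 : F₀ 0 0 = 0)
    (L₀ : E₀ →L[ℝ] E₀) (hL₀ : HasFDerivAt (fun x => F₀ x 0) L₀ 0)
    (K₀ I₀ : Submodule ℝ E₀)
    (hK₀ : K₀ = LinearMap.ker (((L₀ : E₀ →ₗ[ℝ] E₀) ^ Module.finrank ℝ E₀) : Module.End ℝ E₀))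
    (hI₀ : I₀ = LinearMap.range (((L₀ : E₀ →ₗ[ℝ] E₀) ^ Module.finrank ℝ E₀) : Module.End ℝ E₀))
    (π₀ : E₀ →ₗ[ℝ] E₀) (hπI₀ : ∀ x ∈ I₀, π₀ x = x) (hπK₀ : ∀ x ∈ K₀, π₀ x = 0) :
    ∃ (U : Set (E₀ × (Fin p → ℝ))) (φ : E₀ × (Fin p → ℝ) → E₀),
      (∃ O, IsOpen O ∧ U = O ∩ ((K₀ : Set E₀) ×ˢ Λ)) ∧
      ((0 : E₀), (0 : Fin p → ℝ)) ∈ U ∧ ContDiffOn ℝ (⊤ : ℕ∞) φ U ∧ φ (0, 0) = 0 ∧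
      (∀ q, φ q ∈ I₀) ∧ (∀ q ∈ U, π₀ (F₀ (q.1 + φ q) q.2) = 0) ∧
      ContinuousAt φ (0, 0) ∧
      ∃ N : Set ((E₀ × (Fin p → ℝ)) × E₀), IsOpen N ∧
        ((((0 : E₀), (0 : Fin p → ℝ)), (0 : E₀)) ∈ N) ∧
        ∀ x lam y, ((x, lam), y) ∈ N → x ∈ K₀ → lam ∈ Λ → y ∈ I₀ →
          π₀ (F₀ (x + y) lam) = 0 → ((x, lam) ∈ U ∧ y = φ (x, lam)) := by
  have hcompl : IsCompl K₀ I₀ := by rw [hK₀, hI₀]; exact LS_fitting _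
  have hdec : ∀ x : E₀, ∃ k ∈ K₀, ∃ i ∈ I₀, k + i = x :=
    fun x => by
      obtain ⟨k, i, hk, hi, h⟩ := Submodule.codisjoint_iff_exists_add_eq.mp hcompl.codisjoint x
      exact ⟨k, hk, i, hi, h⟩
  have hπmem : ∀ x, π₀ x ∈ I₀ := by
    intro x; obtain ⟨k, hk, i, hi, rfl⟩ := hdec x
    rw [map_add, hπK₀ k hk, hπI₀ i hi, zero_add]; exact hi
  have hKsub : ∀ x, x - π₀ x ∈ K₀ := by
    intro x; obtain ⟨k, hk, i, hi, rfl⟩ := hdec x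
    rw [map_add, hπK₀ k hk, hπI₀ i hi, zero_add, add_sub_cancel_right]; exact hk
  have hLcomm : ∀ y : E₀,
      L₀ (((L₀ : E₀ →ₗ[ℝ] E₀) ^ finrank ℝ E₀) y)
        = ((L₀ : E₀ →ₗ[ℝ] E₀) ^ finrank ℝ E₀) (L₀ y) := by
    intro y
    have h := congrArg (fun f : Module.End ℝ E₀ => f y)
      ((Commute.refl (L₀ : E₀ →ₗ[ℝ] E₀)).pow_right (finrank ℝ E₀)).eq
    simpa [Module.End.mul_apply] using h
  have hLI : ∀ x ∈ I₀, L₀ x ∈ I₀ := by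
    rw [hI₀]; rintro x ⟨y, rfl⟩; exact ⟨L₀ y, (hLcomm y).symm⟩
  have hLinj : ∀ x ∈ I₀, L₀ x = 0 → x = 0 := by
    intro x hx h
    have hker : x ∈ LinearMap.ker (((L₀ : E₀ →ₗ[ℝ] E₀) : Module.End ℝ E₀)
        ^ (finrank ℝ E₀ + 1)) := by
      rw [LinearMap.mem_ker, pow_succ, Module.End.mul_apply]
      have : (L₀ : E₀ →ₗ[ℝ] E₀) x = 0 := h
      rw [this, map_zero]
    rw [Module.End.ker_pow_eq_ker_pow_finrank_of_le (Nat.le_succ _), ← hK₀] at hker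
    exact (Submodule.disjoint_def.mp hcompl.disjoint) x hker hx
  -- continuous linear maps
  let πc : E₀ →L[ℝ] E₀ := LinearMap.toContinuousLinearMap π₀
  have hπc : ∀ x, πc x = π₀ x := fun x => rfl
  let πI : E₀ →L[ℝ] I₀ := πc.codRestrict I₀ (fun x => hπmem x)
  have hπI : ∀ x, (πI x : E₀) = π₀ x := fun x => rfl
  let pK : E₀ →L[ℝ] K₀ := (ContinuousLinearMap.id ℝ E₀ - πc).codRestrict K₀ (fun x => hKsub x)
  have hpK : ∀ x, (pK x : E₀) = x - π₀ x := fun x => rfl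
  have hpKK : ∀ x ∈ K₀, (pK x : E₀) = x := fun x hx => by rw [hpK, hπK₀ x hx, sub_zero]
  let m : E₀ × (Fin p → ℝ) →L[ℝ] K₀ × (Fin p → ℝ) :=
    (pK.comp (ContinuousLinearMap.fst ℝ E₀ _)).prod (ContinuousLinearMap.snd ℝ E₀ _)
  have hm : ∀ q : E₀ × (Fin p → ℝ), m q = (pK q.1, q.2) := fun q => rfl
  let inc : (K₀ × (Fin p → ℝ)) × I₀ →L[ℝ] E₀ × (Fin p → ℝ) :=
    ((K₀.subtypeL.comp ((ContinuousLinearMap.fst ℝ K₀ _).comp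
        (ContinuousLinearMap.fst ℝ _ I₀))) +
      (I₀.subtypeL.comp (ContinuousLinearMap.snd ℝ _ I₀))).prod
      ((ContinuousLinearMap.snd ℝ K₀ _).comp (ContinuousLinearMap.fst ℝ _ I₀))
  have hinc : ∀ z : (K₀ × (Fin p → ℝ)) × I₀,
      inc z = ((z.1.1 : E₀) + (z.2 : E₀), z.1.2) := fun z => rfl
  let Fc : E₀ × (Fin p → ℝ) → E₀ := fun q => F₀ q.1 q.2
  let G : (K₀ × (Fin p → ℝ)) × I₀ → (K₀ × (Fin p → ℝ)) × I₀ :=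
    fun z => (z.1, πI (Fc (inc z)))
  have hFc0 : Fc 0 = 0 := h0
  have hG0 : G 0 = 0 := by
    show ((0 : K₀ × (Fin p → ℝ)), πI (Fc (inc 0))) = 0
    rw [map_zero inc, hFc0, map_zero]
    rfl
  have hFΛ : ContDiffAt ℝ (⊤ : ℕ∞) Fc (0 : E₀ × (Fin p → ℝ)) := by
    apply hs.contDiffAt
    apply (isOpen_univ.prod hΛopen).mem_nhds
    exact ⟨trivial, hΛ0⟩
  have hGsm : ContDiffAt ℝ (⊤ : ℕ∞) G (0 : (K₀ × (Fin p → ℝ)) × I₀) := by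
    apply ContDiffAt.prodMk
    · exact contDiff_fst.contDiffAt
    · have h1 : ContDiffAt ℝ (⊤ : ℕ∞) Fc (inc 0) := by rw [map_zero inc]; exact hFΛ
      exact πI.contDiff.contDiffAt.comp _ (h1.comp _ inc.contDiff.contDiffAt)
  have hFdiff : DifferentiableAt ℝ Fc (0 : E₀ × (Fin p → ℝ)) := hFΛ.differentiableAt (by simp)
  set DF := fderiv ℝ Fc (0 : E₀ × (Fin p → ℝ)) with hDFdef
  have hDF : HasFDerivAt Fc DF 0 := hFdiff.hasFDerivAt
  have hDFL : ∀ e : E₀, DF (e, 0) = L₀ e := by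
    have hinl : HasFDerivAt (fun x : E₀ => ((x, 0) : E₀ × (Fin p → ℝ)))
        (ContinuousLinearMap.inl ℝ E₀ (Fin p → ℝ)) 0 :=
      (ContinuousLinearMap.inl ℝ E₀ (Fin p → ℝ)).hasFDerivAt
    have hcmp : HasFDerivAt (Fc ∘ fun x : E₀ => ((x, 0) : E₀ × (Fin p → ℝ)))
        (DF.comp (ContinuousLinearMap.inl ℝ E₀ (Fin p → ℝ))) 0 :=
      HasFDerivAt.comp 0 hDF hinl
    have hcmp' : HasFDerivAt (fun x : E₀ => F₀ x 0)
        (DF.comp (ContinuousLinearMap.inl ℝ E₀ (Fin p → ℝ))) 0 := hcmp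
    have huniq : DF.comp (ContinuousLinearMap.inl ℝ E₀ (Fin p → ℝ)) = L₀ := hcmp'.unique hL₀
    intro e
    have := congrArg (fun f : E₀ →L[ℝ] E₀ => f e) huniq
    simpa using this
  set D := (ContinuousLinearMap.fst ℝ (K₀ × (Fin p → ℝ)) I₀).prod
    (πI.comp (DF.comp inc)) with hDdef
  have hDapp : ∀ z, D z = (z.1, πI (DF (inc z))) := fun z => rfl
  have hGD : HasFDerivAt G D 0 := by
    apply HasFDerivAt.prodMk
    · exact hasFDerivAt_fst
    · have h1 : HasFDerivAt Fc DF (inc 0) := by rw [map_zero inc]; exact hDF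
      exact πI.hasFDerivAt.comp 0 (h1.comp 0 inc.hasFDerivAt)
  have hDbij : Function.Bijective D := by
    have h0' : ∀ z, D z = 0 → z = 0 := by
      rintro ⟨⟨ξ, μ⟩, η⟩ hz
      have h1 : ((ξ, μ) : K₀ × (Fin p → ℝ)) = 0 := congrArg Prod.fst hz
      have hξ : ξ = 0 := congrArg Prod.fst h1
      have hμ : μ = 0 := congrArg Prod.snd h1
      have h2 : πI (DF (inc ((ξ, μ), η))) = 0 := congrArg Prod.snd hz
      have hincz : inc ((ξ, μ), η) = ((η : E₀), 0) := by
        rw [hinc, hξ, hμ]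
        simp
      rw [hincz, hDFL] at h2
      have h3 : π₀ (L₀ (η : E₀)) = 0 := congrArg Subtype.val h2
      have h4 : L₀ (η : E₀) = 0 := by
        rw [← hπI₀ _ (hLI _ η.2)]; exact h3
      have h5 : (η : E₀) = 0 := hLinj _ η.2 h4
      have hη : η = 0 := Subtype.ext h5
      rw [hξ, hμ, hη]
      rfl
    have hinj : Function.Injective D := by
      intro a b hab
      have h := h0' (a - b) (by rw [map_sub, hab, sub_self])
      exact sub_eq_zero.mp h
    constructor
    · exact hinj
    · have hinj' : Function.Injective ((D : (↥K₀ × (Fin p → ℝ)) × ↥I₀ →ₗ[ℝ]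
          (↥K₀ × (Fin p → ℝ)) × ↥I₀)) := by
        rw [ContinuousLinearMap.coe_coe]
        exact hinj
      have := LinearMap.injective_iff_surjective.mp hinj'
      rwa [ContinuousLinearMap.coe_coe] at this
  have hker : D.ker = ⊥ := LinearMap.ker_eq_bot (f := (D : (↥K₀ × (Fin p → ℝ)) × ↥I₀ →ₗ[ℝ] (↥K₀ × (Fin p → ℝ)) × ↥I₀)) |>.mpr hDbij.1
  have hrange : D.range = ⊤ := LinearMap.range_eq_top (f := (D : (↥K₀ × (Fin p → ℝ)) × ↥I₀ →ₗ[ℝ] (↥K₀ × (Fin p → ℝ)) × ↥I₀)) |>.mpr hDbij.2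
  set eD := ContinuousLinearEquiv.ofBijective D hker hrange with heDdef
  have heD : (eD : (↥K₀ × (Fin p → ℝ)) × ↥I₀ →L[ℝ] (↥K₀ × (Fin p → ℝ)) × ↥I₀) = D :=
    ContinuousLinearEquiv.coe_ofBijective D hker hrange
  have hGD' : HasFDerivAt G
      ((eD : (↥K₀ × (Fin p → ℝ)) × ↥I₀ →L[ℝ] (↥K₀ × (Fin p → ℝ)) × ↥I₀)) 0 := by
    rw [heD]; exact hGD
  have hstrict : HasStrictFDerivAt G
      ((eD : (↥K₀ × (Fin p → ℝ)) × ↥I₀ →L[ℝ] (↥K₀ × (Fin p → ℝ)) × ↥I₀)) 0 :=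
    hGsm.hasStrictFDerivAt' hGD' (by simp)
  set g := hstrict.localInverse G eD 0 with hgdef
  have hleft : ∀ᶠ z in 𝓝 (0 : (K₀ × (Fin p → ℝ)) × I₀), g (G z) = z :=
    hstrict.eventually_left_inverse
  have hright : ∀ᶠ w in 𝓝 (0 : (K₀ × (Fin p → ℝ)) × I₀), G (g w) = w := by
    have := hstrict.eventually_right_inverse
    rwa [hG0] at this
  have hg0 : g 0 = 0 := by
    have := hleft.self_of_nhds
    rwa [hG0] at this
  have hgsm : ContDiffAt ℝ (⊤ : ℕ∞) g (0 : (K₀ × (Fin p → ℝ)) × I₀) := by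
    have h := hGsm.to_localInverse hGD' (by simp)
    rw [hG0] at h
    exact h
  let φhat : K₀ × (Fin p → ℝ) → I₀ := fun u => (g (u, 0)).2
  let φ : E₀ × (Fin p → ℝ) → E₀ := fun q => (φhat (m q) : E₀)
  have hφdef : ∀ q, φ q = (φhat (m q) : E₀) := fun q => rfl
  have hs₁ : {u : K₀ × (Fin p → ℝ) | G (g (u, 0)) = (u, 0)} ∈ 𝓝 (0 : K₀ × (Fin p → ℝ)) := by
    have hι : ContinuousAt (fun u : K₀ × (Fin p → ℝ) =>
        ((u, 0) : (K₀ × (Fin p → ℝ)) × I₀)) 0 :=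
      (continuous_id.prodMk continuous_const).continuousAt
    exact hι.preimage_mem_nhds hright
  have hφhat_sm : ContDiffAt ℝ (⊤ : ℕ∞) φhat (0 : K₀ × (Fin p → ℝ)) := by
    have hι : ContDiffAt ℝ (⊤ : ℕ∞) (fun u : K₀ × (Fin p → ℝ) =>
        ((u, 0) : (K₀ × (Fin p → ℝ)) × I₀)) 0 :=
      (contDiff_id.prodMk contDiff_const).contDiffAt
    have h2 : ContDiffAt ℝ (⊤ : ℕ∞) (g ∘ fun u : K₀ × (Fin p → ℝ) =>
        ((u, 0) : (K₀ × (Fin p → ℝ)) × I₀)) 0 :=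
      ContDiffAt.comp 0 hgsm hι
    exact ContDiffAt.comp 0 contDiff_snd.contDiffAt h2
  have hs₂ex : ∀ᶠ u in 𝓝 (0 : K₀ × (Fin p → ℝ)), ContDiffAt ℝ (⊤ : ℕ∞) φhat u := by
    have hGev : ∀ᶠ z in 𝓝 (0 : (K₀ × (Fin p → ℝ)) × I₀), ContDiffAt ℝ (⊤ : ℕ∞) G z := by
      have hopen : IsOpen (inc ⁻¹' (Set.univ ×ˢ Λ)) :=
        (isOpen_univ.prod hΛopen).preimage inc.continuous
      have h0mem : (0 : (K₀ × (Fin p → ℝ)) × I₀) ∈ inc ⁻¹' (Set.univ ×ˢ Λ) := by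
        show inc 0 ∈ Set.univ ×ˢ Λ; rw [map_zero]; exact ⟨trivial, hΛ0⟩
      filter_upwards [hopen.mem_nhds h0mem] with z hz
      apply ContDiffAt.prodMk
      · exact contDiff_fst.contDiffAt
      · have h1 : ContDiffAt ℝ (⊤ : ℕ∞) Fc (inc z) :=
          hs.contDiffAt ((isOpen_univ.prod hΛopen).mem_nhds hz)
        exact πI.contDiff.contDiffAt.comp _ (h1.comp _ inc.contDiff.contDiffAt)
    have hC1 : ContinuousAt (fderiv ℝ G) 0 := hGsm.continuousAt_fderiv (by simp)
    have hfd0 : fderiv ℝ G 0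
        = (eD : (↥K₀ × (Fin p → ℝ)) × ↥I₀ →L[ℝ] (↥K₀ × (Fin p → ℝ)) × ↥I₀) := hGD'.fderiv
    have hinvev : fderiv ℝ G ⁻¹' Set.range (ContinuousLinearEquiv.toContinuousLinearMap :
        (((↥K₀ × (Fin p → ℝ)) × ↥I₀) ≃L[ℝ] ((↥K₀ × (Fin p → ℝ)) × ↥I₀)) → (((↥K₀ × (Fin p → ℝ)) × ↥I₀) →L[ℝ] ((↥K₀ × (Fin p → ℝ)) × ↥I₀))) ∈ 𝓝 (0 : (K₀ × (Fin p → ℝ)) × I₀) := by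
      apply hC1.preimage_mem_nhds
      rw [hfd0]
      exact ContinuousLinearEquiv.isOpen.mem_nhds ⟨eD, rfl⟩
    have hgcont : ContinuousAt g 0 := by
      have := hstrict.localInverse_continuousAt; rwa [hG0] at this
    have htarget : (hstrict.toOpenPartialHomeomorph G).target ∈ 𝓝 (0 : (K₀ × (Fin p → ℝ)) × I₀) := by
      have := (hstrict.toOpenPartialHomeomorph G).open_target.mem_nhds
        hstrict.image_mem_toOpenPartialHomeomorph_target
      rwa [hG0] at this
    have hgev : ∀ᶠ w in 𝓝 (0 : (K₀ × (Fin p → ℝ)) × I₀), ContDiffAt ℝ (⊤ : ℕ∞) g w := by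
      have h1 : ∀ᶠ w in 𝓝 (0 : (K₀ × (Fin p → ℝ)) × I₀),
          g w ∈ {z | ContDiffAt ℝ (⊤ : ℕ∞) G z} ∩ {z | fderiv ℝ G z ∈
            Set.range (ContinuousLinearEquiv.toContinuousLinearMap :
              (((↥K₀ × (Fin p → ℝ)) × ↥I₀) ≃L[ℝ] ((↥K₀ × (Fin p → ℝ)) × ↥I₀)) → (((↥K₀ × (Fin p → ℝ)) × ↥I₀) →L[ℝ] ((↥K₀ × (Fin p → ℝ)) × ↥I₀)))} := by
        apply hgcont.preimage_mem_nhds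
        rw [hg0]
        exact Filter.inter_mem hGev hinvev
      filter_upwards [h1, htarget] with w hw hwt
      obtain ⟨hwG0, f', hf'⟩ := hw
      have hwG : ContDiffAt ℝ (⊤ : ℕ∞) G (g w) := hwG0
      have hd : HasFDerivAt G
          f'.toContinuousLinearMap (g w) := by
        rw [hf']; exact (hwG.differentiableAt (by simp)).hasFDerivAt
      exact (hstrict.toOpenPartialHomeomorph G).contDiffAt_symm hwt hd hwG
    have hι : Continuous (fun u : K₀ × (Fin p → ℝ) => ((u, 0) : (K₀ × (Fin p → ℝ)) × I₀)) :=
      continuous_id.prodMk continuous_const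
    filter_upwards [hι.continuousAt.preimage_mem_nhds (x := 0) hgev] with u hu
    have hu' : ContDiffAt ℝ (⊤ : ℕ∞) g (u, 0) := hu
    have hι' : ContDiffAt ℝ (⊤ : ℕ∞) (fun u : K₀ × (Fin p → ℝ) =>
        ((u, 0) : (K₀ × (Fin p → ℝ)) × I₀)) u :=
      (contDiff_id.prodMk contDiff_const).contDiffAt
    exact ContDiffAt.comp u contDiff_snd.contDiffAt (ContDiffAt.comp u hu' hι')
  obtain ⟨s₂, hs₂nhds, hs₂sm⟩ : ∃ s₂ ∈ 𝓝 (0 : K₀ × (Fin p → ℝ)),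
      ContDiffOn ℝ (⊤ : ℕ∞) φhat s₂ :=
    ⟨_, hs₂ex, fun u (hu : ContDiffAt ℝ (⊤ : ℕ∞) φhat u) => hu.contDiffWithinAt⟩
  obtain ⟨O₂, hO₂sub, hO₂open, hO₂mem⟩ := mem_nhds_iff.mp (Filter.inter_mem hs₁ hs₂nhds)
  have hOfopen : IsOpen (m ⁻¹' O₂) := hO₂open.preimage m.continuous
  have hOf0 : ((0 : E₀), (0 : Fin p → ℝ)) ∈ m ⁻¹' O₂ := by
    show m 0 ∈ O₂; rw [map_zero]; exact hO₂mem
  have hφsmOf : ContDiffOn ℝ (⊤ : ℕ∞) φ (m ⁻¹' O₂) := by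
    have h1 : ContDiffOn ℝ (⊤ : ℕ∞) (fun q => φhat (m q)) (m ⁻¹' O₂) :=
      (hs₂sm.comp m.contDiff.contDiffOn (fun q hq => (hO₂sub hq).2))
    exact I₀.subtypeL.contDiff.comp_contDiffOn h1
  have hφhat0 : φhat 0 = 0 := by
    show (g ((0 : K₀ × (Fin p → ℝ)), (0 : I₀))).2 = 0
    rw [show (((0 : K₀ × (Fin p → ℝ)), (0 : I₀)) : (K₀ × (Fin p → ℝ)) × I₀) = 0 from rfl, hg0]
    rfl
  have hφ00 : φ (0, 0) = 0 := by
    rw [hφdef, show m ((0 : E₀), (0 : Fin p → ℝ)) = 0 from map_zero m, hφhat0]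
    rfl
  refine ⟨(m ⁻¹' O₂) ∩ ((K₀ : Set E₀) ×ˢ Λ), φ, ⟨m ⁻¹' O₂, hOfopen, rfl⟩,
    ⟨hOf0, ⟨K₀.zero_mem, hΛ0⟩⟩, hφsmOf.mono Set.inter_subset_left, hφ00,
    fun q => (φhat (m q)).2, ?_, ?_, ?_⟩
  · -- solution property
    rintro q ⟨hqO, hqK, -⟩
    have h1 : G (g (m q, 0)) = (m q, 0) := (hO₂sub hqO).1
    have hz1 : (g (m q, 0)).1 = m q := congrArg Prod.fst h1
    have hz2 : πI (Fc (inc (g (m q, 0)))) = 0 := congrArg Prod.snd h1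
    have hincz : inc (g (m q, 0)) = (q.1 + φ q, q.2) := by
      rw [hinc, hz1, hm]
      show ((pK q.1 : E₀) + _, q.2) = _
      rw [hpKK q.1 hqK]
      rfl
    rw [hincz] at hz2
    exact congrArg Subtype.val hz2
  · -- continuity at (0,0)
    exact (hφsmOf.continuousOn.continuousAt (hOfopen.mem_nhds hOf0))
  · -- uniqueness neighbourhood
    let ζ : (E₀ × (Fin p → ℝ)) × E₀ →L[ℝ] (K₀ × (Fin p → ℝ)) × I₀ :=
      (m.comp (ContinuousLinearMap.fst ℝ _ E₀)).prod
        (πI.comp (ContinuousLinearMap.snd ℝ _ E₀))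
    have hζ : ∀ w : (E₀ × (Fin p → ℝ)) × E₀, ζ w = (m w.1, πI w.2) := fun w => rfl
    have hNmem : (ζ ⁻¹' {z | g (G z) = z}) ∩
        (Prod.fst ⁻¹' (m ⁻¹' O₂)) ∈ 𝓝 (0 : (E₀ × (Fin p → ℝ)) × E₀) := by
      apply Filter.inter_mem
      · apply ζ.continuous.continuousAt.preimage_mem_nhds
        rw [map_zero]
        exact hleft
      · apply continuous_fst.continuousAt.preimage_mem_nhds
        exact hOfopen.mem_nhds hOf0
    obtain ⟨N, hNsub, hNopen, hN0⟩ := mem_nhds_iff.mp hNmem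
    refine ⟨N, hNopen, hN0, ?_⟩
    intro x lam y hw hxK hlam hyI hsol
    obtain ⟨hwζ, hwO⟩ := hNsub hw
    have hζw : ζ ((x, lam), y) = ((pK x, lam), πI y) := by rw [hζ, hm]
    have hGz : G ((pK x, lam), πI y) = ((pK x, lam), 0) := by
      show ((pK x, lam), πI (Fc (inc ((pK x, lam), πI y)))) = ((pK x, lam), 0)
      have hincz : inc ((pK x, lam), πI y) = (x + y, lam) := by
        rw [hinc]
        show ((pK x : E₀) + (πI y : E₀), lam) = _
        rw [hpKK x hxK, hπI, hπI₀ y hyI]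
      rw [hincz]
      have h2 : πI (Fc (x + y, lam)) = 0 := Subtype.ext hsol
      rw [h2]
    have hgz : g ((pK x, lam), 0) = ((pK x, lam), πI y) := by
      have h3 : g (G ((pK x, lam), πI y)) = ((pK x, lam), πI y) := by
        have h3' : g (G (ζ ((x, lam), y))) = ζ ((x, lam), y) := hwζ
        rw [hζw] at h3'
        exact h3'
      rw [hGz] at h3
      exact h3
    constructor
    · exact ⟨hwO, hxK, hlam⟩
    · rw [hφdef, hm]
      show y = ((g ((pK x, lam), 0)).2 : E₀)
      rw [hgz]
      show y = (πI y : E₀)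
      rw [hπI, hπI₀ y hyI]

/-- **Quiver equivariant Lyapunov–Schmidt reduction.** Let `(E, R)` be a
representation of a finite quiver, `Λ` an open neighbourhood of `0` in `ℝ^p`, and
`F_v : E_v × Λ → E_v` a smooth `Q`-equivariant family with `F_v(0;0) = 0`. With
`L_v = D_x F_v(0;0)`, `K_v = ker L_v^{d_v}` (generalised kernel), `I_v = range L_v^{d_v}`
(reduced image) and `π_v` the projection onto `I_v` along `K_v`, there exist relatively open
neighbourhoods `U_v` of `(0;0)` in `K_v × Λ` and smooth maps `φ_v : U_v → I_v` with
`φ_v(0;0) = 0` and `π_v(F_v(x + φ_v(x;λ); λ)) = 0`, such that the reduced maps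
`f_v(x;λ) = (Id − π_v)(F_v(x + φ_v(x;λ); λ))` satisfy the quiver equivariance
`R_a(f_{s(a)}(x;λ)) = f_{t(a)}(R_a x; λ)` near `(0;0)`. -/
theorem stmt_8 {V A : Type*} [Finite V] [Finite A] (s t : A → V)
    (E : V → Type*) [∀ v, NormedAddCommGroup (E v)] [∀ v, NormedSpace ℝ (E v)]
    [∀ v, FiniteDimensional ℝ (E v)]
    (R : ∀ a : A, E (s a) →L[ℝ] E (t a))
    {p : ℕ} (Λ : Set (Fin p → ℝ)) (hΛopen : IsOpen Λ) (hΛ0 : (0 : Fin p → ℝ) ∈ Λ)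
    (F : ∀ v : V, E v → (Fin p → ℝ) → E v)
    (hFsmooth : ∀ v, ContDiffOn ℝ (⊤ : ℕ∞) (fun q : E v × (Fin p → ℝ) => F v q.1 q.2)
      (Set.univ ×ˢ Λ))
    (hF0 : ∀ v, F v 0 0 = 0)
    (hFequiv : ∀ (a : A) (x : E (s a)), ∀ lam ∈ Λ,
      R a (F (s a) x lam) = F (t a) (R a x) lam)
    (L : ∀ v : V, E v →L[ℝ] E v)
    (hL : ∀ v, HasFDerivAt (fun x : E v => F v x 0) (L v) 0)
    (K I : ∀ v : V, Submodule ℝ (E v))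
    (hK : ∀ v, K v = LinearMap.ker
      (((L v : E v →ₗ[ℝ] E v) ^ Module.finrank ℝ (E v)) : Module.End ℝ (E v)))
    (hI : ∀ v, I v = LinearMap.range
      (((L v : E v →ₗ[ℝ] E v) ^ Module.finrank ℝ (E v)) : Module.End ℝ (E v)))
    (π : ∀ v : V, E v →ₗ[ℝ] E v)
    (hπI : ∀ v, ∀ x ∈ I v, π v x = x) (hπK : ∀ v, ∀ x ∈ K v, π v x = 0) :
    ∃ (U : ∀ v : V, Set (E v × (Fin p → ℝ))) (φ : ∀ v : V, E v × (Fin p → ℝ) → E v),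
      (∀ v, ∃ O : Set (E v × (Fin p → ℝ)), IsOpen O ∧
        U v = O ∩ ((K v : Set (E v)) ×ˢ Λ)) ∧
      (∀ v, ((0 : E v), (0 : Fin p → ℝ)) ∈ U v) ∧
      (∀ v, ContDiffOn ℝ (⊤ : ℕ∞) (φ v) (U v)) ∧
      (∀ v, φ v (0, 0) = 0) ∧
      (∀ v, ∀ q ∈ U v, φ v q ∈ I v) ∧
      (∀ v, ∀ q ∈ U v, π v (F v (q.1 + φ v q) q.2) = 0) ∧
      (∀ a : A, ∃ W : Set (E (s a) × (Fin p → ℝ)),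
        (∃ O : Set (E (s a) × (Fin p → ℝ)), IsOpen O ∧
          W = O ∩ ((K (s a) : Set (E (s a))) ×ˢ Λ)) ∧
        ((0 : E (s a)), (0 : Fin p → ℝ)) ∈ W ∧ W ⊆ U (s a) ∧
        ∀ q ∈ W, (R a q.1, q.2) ∈ U (t a) ∧
          R a (F (s a) (q.1 + φ (s a) q) q.2 - π (s a) (F (s a) (q.1 + φ (s a) q) q.2)) =
            F (t a) (R a q.1 + φ (t a) (R a q.1, q.2)) q.2
              - π (t a) (F (t a) (R a q.1 + φ (t a) (R a q.1, q.2)) q.2)) := by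
  choose U φ hUrep hU0 hφsm hφ0 hφI' hsol hφcont hNex using
    fun v => LS_aux Λ hΛopen hΛ0 (F v) (hFsmooth v) (hF0 v) (L v) (hL v) (K v) (I v)
      (hK v) (hI v) (π v) (hπI v) (hπK v)
  choose N hNopen hN0 hNuniq using hNex
  refine ⟨U, φ, hUrep, hU0, hφsm, hφ0, fun v q _ => hφI' v q, hsol, ?_⟩
  intro a
  -- equivariance of the linearisation
  have hRL : ∀ x : E (s a), R a (L (s a) x) = L (t a) (R a x) := by
    have h1 : HasFDerivAt (fun x : E (s a) => R a (F (s a) x 0))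
        ((R a).comp (L (s a))) 0 := ((R a).hasFDerivAt).comp 0 (hL (s a))
    have h0' : HasFDerivAt (fun y : E (t a) => F (t a) y 0) (L (t a)) (R a 0) := by
      rw [map_zero]; exact hL (t a)
    have h2 : HasFDerivAt ((fun y : E (t a) => F (t a) y 0) ∘ ⇑(R a))
        ((L (t a)).comp (R a)) 0 := HasFDerivAt.comp 0 h0' (R a).hasFDerivAt
    have heq : (fun x : E (s a) => R a (F (s a) x 0))
        = ((fun y : E (t a) => F (t a) y 0) ∘ ⇑(R a)) :=
      funext fun x => hFequiv a x 0 hΛ0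
    rw [heq] at h1
    have huniq := h1.unique h2
    intro x
    have := congrArg (fun f : E (s a) →L[ℝ] E (t a) => f x) huniq
    simpa using this
  have hcommpow : ∀ (n : ℕ) (x : E (s a)),
      R a (((L (s a) : E (s a) →ₗ[ℝ] E (s a)) ^ n) x)
        = ((L (t a) : E (t a) →ₗ[ℝ] E (t a)) ^ n) (R a x) := by
    intro n
    induction n with
    | zero => intro x; simp
    | succ n ih =>
      intro x
      rw [pow_succ, Module.End.mul_apply, pow_succ, Module.End.mul_apply]
      have h1 := ih ((L (s a) : E (s a) →ₗ[ℝ] E (s a)) x)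
      rw [h1]
      congr 1
      exact hRL x
  have hRK : ∀ x ∈ K (s a), R a x ∈ K (t a) := by
    intro x hx
    rw [hK] at hx ⊢
    have h1 : (((L (s a) : E (s a) →ₗ[ℝ] E (s a)))
        ^ (max (Module.finrank ℝ (E (s a))) (Module.finrank ℝ (E (t a))))) x = 0 := by
      obtain ⟨k, hk⟩ : ∃ k, max (Module.finrank ℝ (E (s a))) (Module.finrank ℝ (E (t a)))
          = k + Module.finrank ℝ (E (s a)) :=
        ⟨_ - _, (Nat.sub_add_cancel (le_max_left _ _)).symm⟩
      rw [hk, pow_add, Module.End.mul_apply, LinearMap.mem_ker.mp hx, map_zero]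
    have h2 : R a x ∈ LinearMap.ker (((L (t a) : E (t a) →ₗ[ℝ] E (t a)))
        ^ (max (Module.finrank ℝ (E (s a))) (Module.finrank ℝ (E (t a))))) := by
      rw [LinearMap.mem_ker, ← hcommpow, h1, map_zero]
    rwa [Module.End.ker_pow_eq_ker_pow_finrank_of_le (le_max_right _ _)] at h2
  have hRI : ∀ x ∈ I (s a), R a x ∈ I (t a) := by
    intro x hx
    rw [hI] at hx ⊢
    rw [← LS_range_stab ((L (s a) : E (s a) →ₗ[ℝ] E (s a)))
      (le_max_left (Module.finrank ℝ (E (s a))) (Module.finrank ℝ (E (t a))))] at hx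
    obtain ⟨y, rfl⟩ := hx
    rw [hcommpow]
    rw [← LS_range_stab ((L (t a) : E (t a) →ₗ[ℝ] E (t a)))
      (le_max_right (Module.finrank ℝ (E (s a))) (Module.finrank ℝ (E (t a))))]
    exact ⟨R a y, rfl⟩
  have hcompl_s : IsCompl (K (s a)) (I (s a)) := by
    rw [hK, hI]; exact LS_fitting _
  have hRπ : ∀ x, π (t a) (R a x) = R a (π (s a) x) := by
    intro x
    obtain ⟨k, i, hk, hi, rfl⟩ :=
      Submodule.codisjoint_iff_exists_add_eq.mp hcompl_s.codisjoint x
    rw [map_add, map_add, map_add, hπK (s a) k hk, hπI (s a) i hi,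
      hπK (t a) _ (hRK k hk), hπI (t a) _ (hRI i hi)]
    simp
  obtain ⟨Os, hOsopen, hUseq⟩ := hUrep (s a)
  have hOs0 : ((0 : E (s a)), (0 : Fin p → ℝ)) ∈ Os := by
    have h := hU0 (s a); rw [hUseq] at h; exact h.1
  set ζ : E (s a) × (Fin p → ℝ) → (E (t a) × (Fin p → ℝ)) × E (t a) :=
    fun q => ((R a q.1, q.2), R a (φ (s a) q)) with hζdef
  have hζcont : ContinuousAt ζ ((0 : E (s a)), (0 : Fin p → ℝ)) := by
    apply ContinuousAt.prodMk
    · exact (((R a).continuous.comp continuous_fst).prodMk continuous_snd).continuousAt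
    · exact (R a).continuous.continuousAt.comp (hφcont (s a))
  have hζ0 : ζ ((0 : E (s a)), (0 : Fin p → ℝ))
      = (((0 : E (t a)), (0 : Fin p → ℝ)), (0 : E (t a))) := by
    rw [hζdef]
    simp only [map_zero, hφ0 (s a)]
  have hNmem : ζ ⁻¹' (N (t a)) ∈ 𝓝 ((0 : E (s a)), (0 : Fin p → ℝ)) := by
    apply hζcont.preimage_mem_nhds
    rw [hζ0]
    exact (hNopen (t a)).mem_nhds (hN0 (t a))
  obtain ⟨O₃, hO₃sub, hO₃open, hO₃mem⟩ := mem_nhds_iff.mp hNmem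
  refine ⟨(Os ∩ O₃) ∩ ((K (s a) : Set (E (s a))) ×ˢ Λ),
    ⟨Os ∩ O₃, hOsopen.inter hO₃open, rfl⟩,
    ⟨⟨hOs0, hO₃mem⟩, ⟨Submodule.zero_mem _, hΛ0⟩⟩, ?_, ?_⟩
  · intro q hq
    rw [hUseq]
    exact ⟨hq.1.1, hq.2⟩
  · rintro q ⟨⟨hqOs, hqO₃⟩, hqK, hqΛ⟩
    have hqU : q ∈ U (s a) := by rw [hUseq]; exact ⟨hqOs, hqK, hqΛ⟩
    have hsols := hsol (s a) q hqU
    have hyI : R a (φ (s a) q) ∈ I (t a) := hRI _ (hφI' (s a) q)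
    have hsolt : π (t a) (F (t a) (R a q.1 + R a (φ (s a) q)) q.2) = 0 := by
      rw [← map_add, ← hFequiv a (q.1 + φ (s a) q) q.2 hqΛ, hRπ, hsols, map_zero]
    have hmemN : ((R a q.1, q.2), R a (φ (s a) q)) ∈ N (t a) := hO₃sub hqO₃
    obtain ⟨hUt, hyeq⟩ := hNuniq (t a) (R a q.1) q.2 (R a (φ (s a) q)) hmemN
      (hRK _ hqK) hqΛ hyI hsolt
    refine ⟨hUt, ?_⟩
    have hXeq : R a q.1 + φ (t a) (R a q.1, q.2) = R a (q.1 + φ (s a) q) := by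
      rw [← hyeq, map_add]
    rw [map_sub, hXeq, ← hFequiv a (q.1 + φ (s a) q) q.2 hqΛ, hRπ]
end

section
/- Let N = (N, E, s, t) and N' = (N', E', s', t') be finite directed multigraphs, and let φ consist of maps φ_N : N → N' and φ_E : E → E' with s'(φ_E(e)) = φ_N(s(e)) and t'(φ_E(e)) = φ_N(t(e)) for all e ∈ E, such that for every node n ∈ N the restriction of φ_E to { e : t(e) = n } is a bijection onto { e' : t'(e') = φ_N(n) } (i.e. φ is a graph fibration). Let X'_{m'} be a real vector space for each m' ∈ N', and give each node m ∈ N the space X_m := X'_{φ_N(m)}. Suppose F_n : (∏_{e : t(e)=n} X'_{φ_N(s(e))}) → X'_{φ_N(n)} (n ∈ N) and F'_{n'} : (∏_{e' : t'(e')=n'} X'_{s'(e')}) → X'_{n'} (n' ∈ N') are component maps satisfying the compatibility condition: for every n ∈ N and every family y = (y_{e'})_{e' : t'(e') = φ_N(n)} with y_{e'} ∈ X'_{s'(e')}, one has F_n((y_{φ_E(e)})_{e : t(e)=n}) = F'_{φ_N(n)}(y). Define the network maps F^N on ∏_{m∈N} X_m by (F^N(x))_n = F_n((x_{s(e)})_{e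 : t(e)=n}), F^{N'} on ∏_{m'∈N'} X'_{m'} by (F^{N'}(y))_{n'} = F'_{n'}((y_{s'(e')})_{e' : t'(e')=n'}), and the linear map R_φ : ∏_{m'∈N'} X'_{m'} → ∏_{m∈N} X_m by (R_φ(y))_m := y_{φ_N(m)}. Then R_φ ∘ F^{N'} = F^N ∘ R_φ. -/
/-- The network map of a network with node set `N`, edge set `E`, node phase spaces `Y n` and
component maps `F n` depending on the states of the sources of the edges targeting `n`. -/
def networkMapFull {N E : Type*} (s t : E → N) (Y : N → Type*)
    (F : ∀ n : N, (∀ e : {e : E // t e = n}, Y (s e.1)) → Y n) :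
    (∀ m : N, Y m) → (∀ m : N, Y m) :=
  fun x n => F n (fun e => x (s e.1))

/-- The pullback (lift) map along a map of nodes `φN : N → N'`, where each node `m` of `N`
carries the phase space of its image `φN m`. -/
def pullbackMap {N N' : Type*} (φN : N → N') (X' : N' → Type*) :
    (∀ m' : N', X' m') → (∀ m : N, X' (φN m)) :=
  fun y m => y (φN m)

/-- **DeVille–Lerman.** Let `φ = (φN, φE)` be a graph fibration between finite
networks `N` and `N'`, give each node `m` of `N` the phase space `X' (φN m)`, and let the
component maps `F` and `F'` be compatible along `φ`. Then the pullback map `R_φ` intertwines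
the two network maps: `R_φ ∘ F^{N'} = F^N ∘ R_φ`. -/
theorem stmt_15 {N E N' E' : Type*} [Finite N] [Finite E] [Finite N'] [Finite E']
    (s t : E → N) (s' t' : E' → N')
    (φN : N → N') (φE : E → E')
    (hs : ∀ e : E, s' (φE e) = φN (s e)) (ht : ∀ e : E, t' (φE e) = φN (t e))
    (hfib : ∀ n : N, Set.BijOn φE {e : E | t e = n} {e' : E' | t' e' = φN n})
    (X' : N' → Type*) [∀ m', AddCommGroup (X' m')] [∀ m', Module ℝ (X' m')]
    (F : ∀ n : N, (∀ e : {e : E // t e = n}, X' (φN (s e.1))) → X' (φN n))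
    (F' : ∀ n' : N', (∀ e' : {e' : E' // t' e' = n'}, X' (s' e'.1)) → X' n')
    (hcompat : ∀ (n : N) (y : ∀ e' : {e' : E' // t' e' = φN n}, X' (s' e'.1)),
      F n (fun e => cast (congrArg X' (hs e.1))
          (y ⟨φE e.1, (ht e.1).trans (congrArg φN e.2)⟩)) = F' (φN n) y) :
    pullbackMap φN X' ∘ networkMapFull s' t' X' F' =
      networkMapFull s t (fun m => X' (φN m)) F ∘ pullbackMap φN X' := by
  funext y n
  simp only [Function.comp, pullbackMap, networkMapFull]
  rw [← hcompat n (fun e' => y (s' e'.1))]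
  congr 1
  funext e
  have h := hs e.1
  exact (cast_eq_iff_heq).mpr (by rw [h])
end

section
/- Consider the quiver representation consisting of E_1 = ℝ⁵ (with coordinates (x₁, y₂, x₃, y₄, x₅)), E_2 = ℝ⁴ (with coordinates (x₁, y₂, x₃, y₄)) and E_3 = ℝ³ (with coordinates (y₁, x₂, y₃)), together with the linear maps R_{a₁}(x₁, y₂, x₃, y₄, x₅) = (x₁, y₂, x₃, y₄) : E_1 → E_2, R_{a₂}(x₁, y₂, x₃, y₄, x₅) = (x₅, y₄, x₃, y₄) : E_1 → E_2, R_{a₃}(y₁, x₂, y₃) = (x₂, y₃, x₂, y₃) : E_3 → E_2, and R_{a₄}(x₁, y₂, x₃, y₄) = (y₂, x₃, y₄) : E_2 → E_3. Then a triple of maps G¹ : ℝ⁵ → ℝ⁵, G² : ℝ⁴ → ℝ⁴, G³ : ℝ³ → ℝ³ satisfies the equivariance relations G² ∘ R_{a₁} = R_{a₁} ∘ G¹, G² ∘ R_{a₂} = R_{a₂} ∘ G¹, G² ∘ R_{a₃} = R_{a₃} ∘ G³ and G³ ∘ R_{a₄} = R_{a₄} ∘ G² if and only if there exist functions h : ℝ⁴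 → ℝ and l : ℝ³ → ℝ such that G¹(x₁, y₂, x₃, y₄, x₅) = (h(x₁, y₂, x₃, y₄), l(y₂, x₃, y₄), h(x₃, y₄, x₃, y₄), l(y₄, x₃, y₄), h(x₅, y₄, x₃, y₄)), G²(x₁, y₂, x₃, y₄) = (h(x₁, y₂, x₃, y₄), l(y₂, x₃, y₄), h(x₃, y₄, x₃, y₄), l(y₄, x₃, y₄)), and G³(y₁, x₂, y₃) = (l(y₁, x₂, y₃), h(x₂, y₃, x₂, y₃), l(y₃, x₂, y₃)). -/
/-- The linear map `R_{a₁} : ℝ⁵ → ℝ⁴`, `(x₁, y₂, x₃, y₄, x₅) ↦ (x₁, y₂, x₃, y₄)`. -/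
def Ra1 : ℝ × ℝ × ℝ × ℝ × ℝ → ℝ × ℝ × ℝ × ℝ :=
  fun p => (p.1, p.2.1, p.2.2.1, p.2.2.2.1)

/-- The linear map `R_{a₂} : ℝ⁵ → ℝ⁴`, `(x₁, y₂, x₃, y₄, x₅) ↦ (x₅, y₄, x₃, y₄)`. -/
def Ra2 : ℝ × ℝ × ℝ × ℝ × ℝ → ℝ × ℝ × ℝ × ℝ :=
  fun p => (p.2.2.2.2, p.2.2.2.1, p.2.2.1, p.2.2.2.1)

/-- The linear map `R_{a₃} : ℝ³ → ℝ⁴`, `(y₁, x₂, y₃) ↦ (x₂, y₃, x₂, y₃)`. -/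
def Ra3 : ℝ × ℝ × ℝ → ℝ × ℝ × ℝ × ℝ :=
  fun p => (p.2.1, p.2.2, p.2.1, p.2.2)

/-- The linear map `R_{a₄} : ℝ⁴ → ℝ³`, `(x₁, y₂, x₃, y₄) ↦ (y₂, x₃, y₄)`. -/
def Ra4 : ℝ × ℝ × ℝ × ℝ → ℝ × ℝ × ℝ :=
  fun p => (p.2.1, p.2.2.1, p.2.2.2)

/-- A triple of maps `(G¹, G², G³)` on `ℝ⁵`, `ℝ⁴`, `ℝ³` is equivariant for
the quiver with maps `R_{a₁}, R_{a₂}, R_{a₃}, R_{a₄}` if and only if there exist functions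
`h : ℝ⁴ → ℝ` and `l : ℝ³ → ℝ` such that `G¹`, `G²`, `G³` have the network form displayed in
Proposition 10.1 of the paper. -/
theorem stmt_16 (G1 : ℝ × ℝ × ℝ × ℝ × ℝ → ℝ × ℝ × ℝ × ℝ × ℝ)
    (G2 : ℝ × ℝ × ℝ × ℝ → ℝ × ℝ × ℝ × ℝ) (G3 : ℝ × ℝ × ℝ → ℝ × ℝ × ℝ) :
    (G2 ∘ Ra1 = Ra1 ∘ G1 ∧ G2 ∘ Ra2 = Ra2 ∘ G1 ∧
      G2 ∘ Ra3 = Ra3 ∘ G3 ∧ G3 ∘ Ra4 = Ra4 ∘ G2) ↔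
    ∃ (h : ℝ × ℝ × ℝ × ℝ → ℝ) (l : ℝ × ℝ × ℝ → ℝ),
      (∀ x1 y2 x3 y4 x5 : ℝ,
        G1 (x1, y2, x3, y4, x5) =
          (h (x1, y2, x3, y4), l (y2, x3, y4), h (x3, y4, x3, y4), l (y4, x3, y4),
            h (x5, y4, x3, y4))) ∧
      (∀ x1 y2 x3 y4 : ℝ,
        G2 (x1, y2, x3, y4) =
          (h (x1, y2, x3, y4), l (y2, x3, y4), h (x3, y4, x3, y4), l (y4, x3, y4))) ∧
      (∀ y1 x2 y3 : ℝ,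
        G3 (y1, x2, y3) =
          (l (y1, x2, y3), h (x2, y3, x2, y3), l (y3, x2, y3))) := by

  constructor
  · rintro ⟨h1, h2, h3, h4⟩
    have e1 : ∀ x1 y2 x3 y4 x5 : ℝ, G2 (x1, y2, x3, y4) =
        ((G1 (x1,y2,x3,y4,x5)).1, (G1 (x1,y2,x3,y4,x5)).2.1,
         (G1 (x1,y2,x3,y4,x5)).2.2.1, (G1 (x1,y2,x3,y4,x5)).2.2.2.1) := by
      intro x1 y2 x3 y4 x5
      simpa [Ra1] using congrFun h1 (x1,y2,x3,y4,x5)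
    have e2 : ∀ x1 y2 x3 y4 x5 : ℝ, G2 (x5, y4, x3, y4) =
        ((G1 (x1,y2,x3,y4,x5)).2.2.2.2, (G1 (x1,y2,x3,y4,x5)).2.2.2.1,
         (G1 (x1,y2,x3,y4,x5)).2.2.1, (G1 (x1,y2,x3,y4,x5)).2.2.2.1) := by
      intro x1 y2 x3 y4 x5
      simpa [Ra2] using congrFun h2 (x1,y2,x3,y4,x5)
    have e3 : ∀ y1 x2 y3 : ℝ, G2 (x2, y3, x2, y3) =
        ((G3 (y1,x2,y3)).2.1, (G3 (y1,x2,y3)).2.2,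
         (G3 (y1,x2,y3)).2.1, (G3 (y1,x2,y3)).2.2) := by
      intro y1 x2 y3
      simpa [Ra3] using congrFun h3 (y1,x2,y3)
    have e4 : ∀ x1 y2 x3 y4 : ℝ, G3 (y2, x3, y4) =
        ((G2 (x1,y2,x3,y4)).2.1, (G2 (x1,y2,x3,y4)).2.2.1, (G2 (x1,y2,x3,y4)).2.2.2) := by
      intro x1 y2 x3 y4
      simpa [Ra4] using congrFun h4 (x1,y2,x3,y4)
    have hG2 : ∀ x1 y2 x3 y4 : ℝ, G2 (x1, y2, x3, y4) =
        ((G2 (x1,y2,x3,y4)).1, (G3 (y2,x3,y4)).1, (G2 (x3,y4,x3,y4)).1, (G3 (y4,x3,y4)).1) := by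
      intro x1 y2 x3 y4
      have E1 := e1 x1 y2 x3 y4 x3
      have E2 := e2 x1 y2 x3 y4 x3
      have E3 := e3 0 x3 y4
      have E4 := e4 x1 y2 x3 y4
      have E4' := e4 x3 y4 x3 y4
      simp only [Prod.ext_iff] at E1 E2 E3 E4 E4'
      obtain ⟨E11, E12, E13, E14⟩ := E1
      obtain ⟨E21, E22, E23, E24⟩ := E2
      obtain ⟨E31, E32, E33, E34⟩ := E3
      obtain ⟨E41, E42, E43⟩ := E4
      obtain ⟨E51, E52, E53⟩ := E4'
      have c3 : (G2 (x1,y2,x3,y4)).2.2.1 = (G2 (x3,y4,x3,y4)).1 := by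
        rw [E13, ← E23, E33]; exact E31.symm
      have c4 : (G2 (x1,y2,x3,y4)).2.2.2 = (G3 (y4,x3,y4)).1 := by
        rw [E14, ← E22]; exact E51.symm
      exact Prod.ext rfl (Prod.ext E41.symm (Prod.ext c3 c4))
    have hG3 : ∀ y1 x2 y3 : ℝ, G3 (y1, x2, y3) =
        ((G3 (y1,x2,y3)).1, (G2 (x2,y3,x2,y3)).1, (G3 (y3,x2,y3)).1) := by
      intro y1 x2 y3
      rw [e4 0 y1 x2 y3, hG2 0 y1 x2 y3]
    have hG1 : ∀ x1 y2 x3 y4 x5 : ℝ, G1 (x1, y2, x3, y4, x5) =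
        ((G2 (x1,y2,x3,y4)).1, (G3 (y2,x3,y4)).1, (G2 (x3,y4,x3,y4)).1,
         (G3 (y4,x3,y4)).1, (G2 (x5,y4,x3,y4)).1) := by
      intro x1 y2 x3 y4 x5
      have E1 := e1 x1 y2 x3 y4 x5
      have E2 := e2 x1 y2 x3 y4 x5
      rw [hG2 x1 y2 x3 y4] at E1
      simp only [Prod.ext_iff] at E1 E2
      obtain ⟨E11, E12, E13, E14⟩ := E1
      obtain ⟨E21, E22, E23, E24⟩ := E2
      exact Prod.ext E11.symm (Prod.ext E12.symm (Prod.ext E13.symm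
        (Prod.ext E14.symm E21.symm)))
    exact ⟨fun q => (G2 q).1, fun r => (G3 r).1, hG1, hG2, hG3⟩
  · rintro ⟨h, l, hG1, hG2, hG3⟩
    refine ⟨?_, ?_, ?_, ?_⟩ <;>
    · funext p
      obtain ⟨a, b, c, d⟩ := p
      first
      | (obtain ⟨d, e⟩ := d; simp [Ra1, Ra2, Ra3, Ra4, Function.comp, hG1, hG2, hG3])
      | simp [Ra1, Ra2, Ra3, Ra4, Function.comp, hG1, hG2, hG3]
end
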